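/- Let Q be a finite quiver, A a subset of its arrows, and I the two-sided ideal of the path algebra kQ generated by a family of elements, each of which is a k-linear combination of paths that all contain at least one arrow from A. If c is a nontrivial oriented cycle in Q none of whose arrows belongs to A, then c^m ∉ I for every m ≥ 1; in particular kQ/I is infinite dimensional over k. -/

import Mathlib

structure QuiverData where
  V : Type
  E : Type
  s : E → V
  t : E → V

namespace QuiverData

/-- The defining relations of the path algebra `kQ`, presented as a quotient of the free
algebra on the vertices and arrows of `Q`: the vertices become a complete set of orthogonal
idempotents summing to `1`, and each arrow `e` is a path from `s e` to `t e`
(composition written left to right). -/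
inductive PRel (k : Type) [Field k] (Q : QuiverData) [Fintype Q.V] [DecidableEq Q.V] :
    FreeAlgebra k (Q.V ⊕ Q.E) → FreeAlgebra k (Q.V ⊕ Q.E) → Prop
  | idem (v : Q.V) :
      PRel k Q (FreeAlgebra.ι k (Sum.inl v) * FreeAlgebra.ι k (Sum.inl v))
        (FreeAlgebra.ι k (Sum.inl v))
  | orth (v w : Q.V) (h : v ≠ w) :
      PRel k Q (FreeAlgebra.ι k (Sum.inl v) * FreeAlgebra.ι k (Sum.inl w)) 0
  | unit :
      PRel k Q (∑ v : Q.V, FreeAlgebra.ι k (Sum.inl v)) 1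
  | src (v : Q.V) (e : Q.E) :
      PRel k Q (FreeAlgebra.ι k (Sum.inl v) * FreeAlgebra.ι k (Sum.inr e))
        (if v = Q.s e then FreeAlgebra.ι k (Sum.inr e) else 0)
  | tgt (v : Q.V) (e : Q.E) :
      PRel k Q (FreeAlgebra.ι k (Sum.inr e) * FreeAlgebra.ι k (Sum.inl v))
        (if v = Q.t e then FreeAlgebra.ι k (Sum.inr e) else 0)

/-- The path algebra `kQ` of a finite quiver. -/
abbrev PathAlg (k : Type) [Field k] (Q : QuiverData) [Fintype Q.V] [DecidableEq Q.V] :=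
  RingQuot (PRel k Q)

noncomputable def arrowElem (k : Type) [Field k] (Q : QuiverData) [Fintype Q.V]
    [DecidableEq Q.V] (e : Q.E) : PathAlg k Q :=
  RingQuot.mkAlgHom k (PRel k Q) (FreeAlgebra.ι k (Sum.inr e))

/-- The element of the path algebra given by a (composable) list of arrows. -/
noncomputable def pathElem (k : Type) [Field k] (Q : QuiverData) [Fintype Q.V]
    [DecidableEq Q.V] (l : List Q.E) : PathAlg k Q :=
  (l.map (arrowElem k Q)).prod

end QuiverData

/-!
Send each vertex `v` to the matrix unit `E_vv` and each arrow `e` to `X • E_{s e, t e}` if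
`e ∉ A` and to `0` if `e ∈ A`. These matrices over `k[X]` satisfy the relations of `kQ`,
giving an algebra map `φ : kQ → Mat_V(k[X])` that kills every path through `A`, hence all of
`I`, while `φ (c ^ m) = X ^ (m * |c|) • E_uu ≠ 0` for the vertex `u` where `c` starts. The
`(u, u)`-entry of `φ` therefore factors through `kQ/I`, and it sends the classes of the powers
of `c` to distinct powers of `X`, so these classes are linearly independent.
-/

namespace QuiverData

open Matrix Polynomial

variable (k : Type) [Field k] (Q : QuiverData) [Fintype Q.V] [DecidableEq Q.V]

lemma pathElem_append (l₁ l₂ : List Q.E) :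
    pathElem k Q (l₁ ++ l₂) = pathElem k Q l₁ * pathElem k Q l₂ := by
  simp [pathElem]

lemma pathElem_flatten_replicate (c : List Q.E) (m : ℕ) :
    pathElem k Q (List.flatten (List.replicate m c)) = pathElem k Q c ^ m := by
  induction m with
  | zero => simp [pathElem]
  | succ n ih => rw [List.replicate_succ, List.flatten_cons, pathElem_append, ih, pow_succ']

variable (A : Set Q.E)

open scoped Classical in
noncomputable def avoidRepGen : Q.V ⊕ Q.E → Matrix Q.V Q.V k[X]
  | Sum.inl v => single v v 1
  | Sum.inr e => if e ∈ A then 0 else single (Q.s e) (Q.t e) X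

lemma avoidRepGen_respects_rel ⦃x y : FreeAlgebra k (Q.V ⊕ Q.E)⦄ (h : PRel k Q x y) :
    FreeAlgebra.lift k (avoidRepGen k Q A) x = FreeAlgebra.lift k (avoidRepGen k Q A) y := by
  induction h with
  | idem v => simp [avoidRepGen]
  | orth v w h => simp [avoidRepGen, h]
  | unit => simp [avoidRepGen, sum_single_one]
  | src v e => by_cases hv : v = Q.s e <;> by_cases hA : e ∈ A <;> simp [avoidRepGen, hA, hv]
  | tgt v e =>
    by_cases hv : v = Q.t e <;> by_cases hA : e ∈ A <;>
      simp [avoidRepGen, hA, hv, @eq_comm _ (Q.t e)]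

noncomputable def avoidRep : PathAlg k Q →ₐ[k] Matrix Q.V Q.V k[X] :=
  RingQuot.liftAlgHom k ⟨FreeAlgebra.lift k (avoidRepGen k Q A), avoidRepGen_respects_rel k Q A⟩

lemma avoidRep_arrowElem_of_mem {e : Q.E} (he : e ∈ A) :
    avoidRep k Q A (arrowElem k Q e) = 0 := by
  simp [avoidRep, arrowElem, RingQuot.liftAlgHom_mkAlgHom_apply, avoidRepGen, he]

open scoped Classical in
lemma avoidRep_arrowElem_of_not_mem {e : Q.E} (he : e ∉ A) :
    avoidRep k Q A (arrowElem k Q e) = single (Q.s e) (Q.t e) X := by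
  simp [avoidRep, arrowElem, RingQuot.liftAlgHom_mkAlgHom_apply, avoidRepGen, he]

lemma avoidRep_pathElem_of_exists_mem {l : List Q.E} (hl : ∃ a ∈ l, a ∈ A) :
    avoidRep k Q A (pathElem k Q l) = 0 := by
  obtain ⟨a, ha, haA⟩ := hl
  rw [pathElem, map_list_prod]
  exact List.prod_eq_zero (List.mem_map.mpr
    ⟨arrowElem k Q a, List.mem_map_of_mem ha, avoidRep_arrowElem_of_mem k Q A haA⟩)

lemma avoidRep_pathElem_of_forall_not_mem (l : List Q.E) (h₀ : l ≠ [])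
    (hl : l.IsChain (fun a b => Q.t a = Q.s b)) (hA : ∀ a ∈ l, a ∉ A) :
    avoidRep k Q A (pathElem k Q l) =
      single (Q.s (l.head h₀)) (Q.t (l.getLast h₀)) (X ^ l.length) := by
  classical
  induction l with
  | nil => exact absurd rfl h₀
  | cons e rest ih =>
    have he := avoidRep_arrowElem_of_not_mem k Q A (hA e List.mem_cons_self)
    cases rest with
    | nil => simpa [pathElem] using he
    | cons e' rest' =>
      obtain ⟨hstep, hrest⟩ := List.isChain_cons_cons.mp hl
      have hcons :
          pathElem k Q (e :: e' :: rest') = arrowElem k Q e * pathElem k Q (e' :: rest') := by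
        simp [pathElem]
      rw [hcons, map_mul, he, ih (List.cons_ne_nil _ _) hrest
        (fun a ha => hA a (List.mem_cons_of_mem _ ha)), List.head_cons,
        List.getLast_cons (List.cons_ne_nil _ _), List.head_cons, ← hstep,
        single_mul_single_same, ← pow_succ']
      rfl

lemma span_ideal_le_ker_avoidRep (gens : Set (PathAlg k Q))
    (hg : ∀ g ∈ gens, g ∈ Submodule.span k
      {y : PathAlg k Q | ∃ l : List Q.E,
        l.IsChain (fun a b => Q.t a = Q.s b) ∧ (∃ a ∈ l, a ∈ A) ∧ y = pathElem k Q l}) :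
    Submodule.span k {x : PathAlg k Q | ∃ g ∈ gens, ∃ a b : PathAlg k Q, x = a * g * b}
      ≤ LinearMap.ker (avoidRep k Q A).toLinearMap := by
  have hgens (g : PathAlg k Q) (hg' : g ∈ gens) : avoidRep k Q A g = 0 := by
    refine (LinearMap.mem_ker (f := (avoidRep k Q A).toLinearMap)).mp
      (Submodule.span_le.mpr ?_ (hg g hg'))
    rintro _ ⟨l, -, hlA, rfl⟩
    exact avoidRep_pathElem_of_exists_mem k Q A hlA
  rw [Submodule.span_le]
  rintro _ ⟨g, hg', a, b, rfl⟩
  simp [hgens g hg']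

end QuiverData

lemma Matrix.single_pow_succ {n R : Type*} [Fintype n] [DecidableEq n] [Semiring R]
    (i : n) (r : R) (m : ℕ) : single i i r ^ (m + 1) = single i i (r ^ (m + 1)) := by
  induction m with
  | zero => simp
  | succ m ih => rw [pow_succ, ih, single_mul_single_same, ← pow_succ]

lemma Polynomial.linearIndependent_X_pow_comp {R : Type*} [Semiring R] {f : ℕ → ℕ}
    (hf : Function.Injective f) : LinearIndependent R (fun n => (X : Polynomial R) ^ f n) := by
  simpa [Function.comp_def, coe_basisMonomials, ← C_mul_X_pow_eq_monomial] using
    (basisMonomials R).linearIndependent.comp f hf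

open QuiverData Matrix Polynomial in
theorem stmt3_general (k : Type) [Field k] (Q : QuiverData) [Fintype Q.V]
    [DecidableEq Q.V]
    (A : Set Q.E) (gens : Set (QuiverData.PathAlg k Q))
    (hg : ∀ g ∈ gens, g ∈ Submodule.span k
      {y : QuiverData.PathAlg k Q | ∃ l : List Q.E,
        l.Chain' (fun a b => Q.t a = Q.s b) ∧ (∃ a ∈ l, a ∈ A) ∧
        y = QuiverData.pathElem k Q l})
    (c : List Q.E) (hc0 : c ≠ [])
    (hchain : c.Chain' (fun a b => Q.t a = Q.s b))
    (hcyc : Q.t (c.getLast hc0) = Q.s (c.head hc0))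
    (hcA : ∀ a ∈ c, a ∉ A) :
    (∀ m : ℕ, 1 ≤ m →
      QuiverData.pathElem k Q (List.flatten (List.replicate m c)) ∉
        Submodule.span k {x : QuiverData.PathAlg k Q |
          ∃ g ∈ gens, ∃ a b : QuiverData.PathAlg k Q, x = a * g * b}) ∧
    ¬ Module.Finite k (QuiverData.PathAlg k Q ⧸
        Submodule.span k {x : QuiverData.PathAlg k Q |
          ∃ g ∈ gens, ∃ a b : QuiverData.PathAlg k Q, x = a * g * b}) := by
  set I := Submodule.span k {x : PathAlg k Q | ∃ g ∈ gens, ∃ a b : PathAlg k Q, x = a * g * b}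
  set u := Q.s (c.head hc0)
  set ψ : PathAlg k Q →ₗ[k] k[X] :=
    entryLinearMap k k[X] u u ∘ₗ (avoidRep k Q A).toLinearMap
  have hI : I ≤ LinearMap.ker ψ :=
    (span_ideal_le_ker_avoidRep k Q A gens hg).trans (LinearMap.ker_le_ker_comp _ _)
  have hψ (n : ℕ) :
      ψ (pathElem k Q (List.flatten (List.replicate (n + 1) c))) = X ^ (c.length * (n + 1)) := by
    simp [ψ, u, pathElem_flatten_replicate, single_pow_succ, ← pow_mul, hcyc,
      avoidRep_pathElem_of_forall_not_mem k Q A c hc0 hchain hcA]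
  have hlen : 0 < c.length := List.length_pos_of_ne_nil hc0
  refine ⟨fun m hm hmem => ?_, fun hfin => ?_⟩
  · obtain ⟨n, rfl⟩ := Nat.exists_eq_add_of_le' hm
    exact pow_ne_zero _ X_ne_zero ((hψ n).symm.trans (hI hmem))
  · have hli : LinearIndependent k
        (fun n => I.mkQ (pathElem k Q (List.flatten (List.replicate (n + 1) c)))) := by
      refine LinearIndependent.of_comp (I.liftQ ψ hI) ?_
      simpa [Function.comp_def, hψ] using linearIndependent_X_pow_comp (R := k)
        (f := fun n => c.length * (n + 1))
        fun a b h => by simpa using Nat.eq_of_mul_eq_mul_left hlen h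
    exact not_finite_iff_infinite.mpr inferInstance hli.finite_of_isNoetherian

/-- if `I` is the two-sided ideal of `kQ` generated by elements that are linear
combinations of paths each containing an arrow from `A`, and `c` is a nontrivial oriented cycle
avoiding `A`, then no power of `c` lies in `I`, and `kQ/I` is infinite dimensional. -/
theorem stmt3 (k : Type) [Field k] (Q : QuiverData) [Fintype Q.V] [Fintype Q.E]
    [DecidableEq Q.V]
    (A : Set Q.E) (gens : Set (QuiverData.PathAlg k Q))
    (hg : ∀ g ∈ gens, g ∈ Submodule.span k
      {y : QuiverData.PathAlg k Q | ∃ l : List Q.E,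
        l.Chain' (fun a b => Q.t a = Q.s b) ∧ (∃ a ∈ l, a ∈ A) ∧
        y = QuiverData.pathElem k Q l})
    (c : List Q.E) (hc0 : c ≠ [])
    (hchain : c.Chain' (fun a b => Q.t a = Q.s b))
    (hcyc : Q.t (c.getLast hc0) = Q.s (c.head hc0))
    (hcA : ∀ a ∈ c, a ∉ A) :
    (∀ m : ℕ, 1 ≤ m →
      QuiverData.pathElem k Q (List.flatten (List.replicate m c)) ∉
        Submodule.span k {x : QuiverData.PathAlg k Q |
          ∃ g ∈ gens, ∃ a b : QuiverData.PathAlg k Q, x = a * g * b}) ∧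
    ¬ Module.Finite k (QuiverData.PathAlg k Q ⧸
        Submodule.span k {x : QuiverData.PathAlg k Q |
          ∃ g ∈ gens, ∃ a b : QuiverData.PathAlg k Q, x = a * g * b}) :=
  stmt3_general k Q A gens hg c hc0 hchain hcyc hcA
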